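/- The quasi-Cauchy density has Cauchy-weight tails: u² γ(u) ≤ (2π)^{-1/2} for every real u, and u² γ(u) → (2π)^{-1/2} as |u| → ∞. -/

import Mathlib

open MeasureTheory Real Filter

set_option maxHeartbeats 1000000

/-- The standard normal density. -/
noncomputable def phi (x : ℝ) : ℝ := (Real.sqrt (2 * Real.pi))⁻¹ * Real.exp (-x ^ 2 / 2)

/-- The standard normal cumulative distribution function. -/
noncomputable def Phi (x : ℝ) : ℝ := ∫ t in Set.Iic x, phi t

/-- The upper tail of the standard normal distribution. -/
noncomputable def PhiBar (x : ℝ) : ℝ := 1 - Phi x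

/-- The quasi-Cauchy density. -/
noncomputable def quasiCauchy (u : ℝ) : ℝ :=
  (Real.sqrt (2 * Real.pi))⁻¹ * (1 - |u| * PhiBar |u| / phi u)

lemma phi_pos (x : ℝ) : 0 < phi x := by
  unfold phi
  have : 0 < Real.pi := Real.pi_pos
  positivity

lemma phi_cont : Continuous phi := by
  unfold phi; fun_prop

lemma hasDerivAt_phi (x : ℝ) : HasDerivAt phi (-x * phi x) x := by
  have h : HasDerivAt (fun y : ℝ => -y ^ 2 / 2) (-x) x := by
    have := ((hasDerivAt_pow 2 x).neg).div_const 2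
    refine this.congr_deriv ?_
    simp; ring
  have h2 := (h.exp).const_mul (Real.sqrt (2 * Real.pi))⁻¹
  have he : phi = fun y => (Real.sqrt (2 * Real.pi))⁻¹ * Real.exp (-y ^ 2 / 2) := rfl
  rw [he]
  refine h2.congr_deriv ?_
  beta_reduce
  ring

lemma integrable_phi : Integrable phi := by
  have h : Integrable (fun x : ℝ => Real.exp (-(1/2 : ℝ) * x ^ 2)) :=
    integrable_exp_neg_mul_sq (by norm_num)
  have := h.const_mul (Real.sqrt (2 * Real.pi))⁻¹
  apply this.congr
  filter_upwards with x
  unfold phi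
  congr 1
  ring_nf

lemma integral_phi : ∫ x, phi x = 1 := by
  unfold phi
  have h : ∀ x : ℝ, (Real.sqrt (2 * Real.pi))⁻¹ * Real.exp (-x ^ 2 / 2)
      = (Real.sqrt (2 * Real.pi))⁻¹ * Real.exp (-(1/2 : ℝ) * x ^ 2) := by
    intro x; congr 1; ring_nf
  simp_rw [h]
  rw [MeasureTheory.integral_const_mul, integral_gaussian]
  have h2 : Real.pi / (1/2 : ℝ) = 2 * Real.pi := by ring
  rw [h2, inv_mul_cancel₀]
  exact ne_of_gt (Real.sqrt_pos.2 (by positivity))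

lemma hasDerivAt_Phi (x : ℝ) : HasDerivAt Phi (phi x) x := by
  have key : ∀ y : ℝ, Phi y = Phi 0 + ∫ t in (0:ℝ)..y, phi t := by
    intro y
    have := intervalIntegral.integral_Iic_sub_Iic (μ := volume)
      (integrable_phi.integrableOn) (integrable_phi.integrableOn) (a := 0) (b := y)
    unfold Phi
    linarith
  have h1 : HasDerivAt (fun y => ∫ t in (0:ℝ)..y, phi t) (phi x) x :=
    intervalIntegral.integral_hasDerivAt_right
      (integrable_phi.intervalIntegrable)
      phi_cont.stronglyMeasurable.stronglyMeasurableAtFilter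
      phi_cont.continuousAt
  have he : Phi = fun y => Phi 0 + ∫ t in (0:ℝ)..y, phi t := funext key
  rw [he]
  exact h1.const_add _

lemma tendsto_Phi : Tendsto Phi atTop (nhds 1) := by
  have hc : AECover (volume : Measure ℝ) atTop (fun i : ℝ => Set.Iic i) :=
    aecover_Iic tendsto_id
  have := hc.integral_tendsto_of_countably_generated integrable_phi
  rw [integral_phi] at this
  exact this

lemma tendsto_PhiBar : Tendsto PhiBar atTop (nhds 0) := by
  have h : Tendsto (fun x => 1 - Phi x) atTop (nhds (1 - 1)) :=
    tendsto_const_nhds.sub tendsto_Phi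
  unfold PhiBar
  simpa using h

lemma tendsto_phi : Tendsto phi atTop (nhds 0) := by
  unfold phi
  rw [show (0:ℝ) = (Real.sqrt (2 * Real.pi))⁻¹ * 0 by ring]
  apply Tendsto.const_mul
  apply Real.tendsto_exp_atBot.comp
  have h1 : Tendsto (fun x : ℝ => x ^ 2) atTop atTop := tendsto_pow_atTop (by norm_num)
  have h2 : Tendsto (fun x : ℝ => -x ^ 2) atTop atBot := tendsto_neg_atBot_iff.mpr h1
  exact h2.atBot_div_const (by norm_num)

/-- Lower Mills bound: `φ(x)·x/(1+x²) ≤ Φ̄(x)`. -/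
lemma mills_lower (x : ℝ) : phi x * x / (1 + x ^ 2) ≤ PhiBar x := by
  set f : ℝ → ℝ := fun y => PhiBar y - phi y * y / (1 + y ^ 2) with hf
  have hder : ∀ y : ℝ, HasDerivAt f (-(2 * phi y / (1 + y ^ 2) ^ 2)) y := by
    intro y
    have hy : (1 : ℝ) + y ^ 2 ≠ 0 := by positivity
    have h1 : HasDerivAt (fun z : ℝ => PhiBar z) (-phi y) y := by
      have := (hasDerivAt_Phi y).const_sub 1
      unfold PhiBar
      exact this
    have hnum : HasDerivAt (fun z : ℝ => phi z * z) (-y * phi y * y + phi y * 1) y :=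
      (hasDerivAt_phi y).mul (hasDerivAt_id y)
    have h2 : HasDerivAt (fun z : ℝ => phi z * z / (1 + z ^ 2))
        (((-y * phi y * y + phi y * 1) * (1 + y ^ 2) - phi y * y * (2 * y ^ 1)) / (1 + y ^ 2) ^ 2) y :=
      hnum.div ((hasDerivAt_pow 2 y).const_add 1) hy
    have h4 := h1.sub h2
    refine h4.congr_deriv ?_
    have hphi := phi_pos y
    field_simp
    ring
  have hanti : StrictAnti f := by
    apply strictAnti_of_deriv_neg
    intro y
    rw [(hder y).deriv]
    have := phi_pos y
    have hy : (0:ℝ) < (1 + y ^ 2) ^ 2 := by positivity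
    have : 0 < 2 * phi y / (1 + y ^ 2) ^ 2 := by positivity
    linarith
  have hlim : Tendsto f atTop (nhds 0) := by
    have h2 : Tendsto (fun y : ℝ => phi y * y / (1 + y ^ 2)) atTop (nhds 0) := by
      have hneg : Tendsto (fun y : ℝ => -phi y) atTop (nhds 0) := by
        simpa using tendsto_phi.neg
      apply tendsto_of_tendsto_of_tendsto_of_le_of_le' hneg tendsto_phi
      · filter_upwards [eventually_ge_atTop (0:ℝ)] with y hy
        have hphi := phi_pos y
        have hden : (0:ℝ) < 1 + y ^ 2 := by positivity
        have hnn : 0 ≤ phi y * y / (1 + y ^ 2) := by positivity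
        linarith
      · filter_upwards [eventually_ge_atTop (1:ℝ)] with y hy
        have hphi := phi_pos y
        have hden : (0:ℝ) < 1 + y ^ 2 := by positivity
        rw [div_le_iff₀ hden]
        nlinarith [mul_le_mul_of_nonneg_left (show y ≤ 1 + y ^ 2 by nlinarith) (le_of_lt hphi)]
    have := tendsto_PhiBar.sub h2
    simpa using this
  have : (0:ℝ) ≤ f x := by
    refine le_of_tendsto hlim ?_
    filter_upwards [eventually_ge_atTop x] with y hy
    exact hanti.antitone hy
  simp only [hf] at this
  linarith

/-- Upper Mills bound: `Φ̄(x) ≤ φ(x)·(x⁻¹ - (x³)⁻¹ + 3(x⁵)⁻¹)` for `x > 0`. -/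
lemma mills_upper {x : ℝ} (hx : 0 < x) :
    PhiBar x ≤ phi x * (x⁻¹ - (x ^ 3)⁻¹ + 3 * (x ^ 5)⁻¹) := by
  set g : ℝ → ℝ := fun y => phi y * (y⁻¹ - (y ^ 3)⁻¹ + 3 * (y ^ 5)⁻¹) - PhiBar y with hg
  have hder : ∀ y : ℝ, 0 < y → HasDerivAt g (-(15 * phi y / y ^ 6)) y := by
    intro y hy
    have hy0 : y ≠ 0 := ne_of_gt hy
    have h1 : HasDerivAt (fun z : ℝ => z⁻¹ - (z ^ 3)⁻¹ + 3 * (z ^ 5)⁻¹)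
        (-(1 / y ^ 2) - -((3 * y ^ 2) / (y ^ 3) ^ 2) + 3 * -((5 * y ^ 4) / (y ^ 5) ^ 2)) y := by
      have ha : HasDerivAt (fun z : ℝ => z⁻¹) (-(1 / y ^ 2)) y := by
        simpa using (hasDerivAt_inv hy0)
      have hb : HasDerivAt (fun z : ℝ => (z ^ 3)⁻¹) (-((3 * y ^ 2) / (y ^ 3) ^ 2)) y := by
        have := (hasDerivAt_pow 3 y).inv (pow_ne_zero 3 hy0)
        refine this.congr_deriv ?_
        push_cast
        ring
      have hc : HasDerivAt (fun z : ℝ => (z ^ 5)⁻¹) (-((5 * y ^ 4) / (y ^ 5) ^ 2)) y := by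
        have := (hasDerivAt_pow 5 y).inv (pow_ne_zero 5 hy0)
        refine this.congr_deriv ?_
        push_cast
        ring
      exact (ha.sub hb).add (hc.const_mul 3)
    have h2 := (hasDerivAt_phi y).mul h1
    have h3 : HasDerivAt (fun z : ℝ => PhiBar z) (-phi y) y := by
      have := (hasDerivAt_Phi y).const_sub 1
      unfold PhiBar
      exact this
    have h4 := h2.sub h3
    refine h4.congr_deriv ?_
    have hphi := phi_pos y
    field_simp
    ring
  have hanti : StrictAntiOn g (Set.Ioi 0) := by
    apply strictAntiOn_of_deriv_neg (convex_Ioi 0)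
    · intro y hy
      exact ((hder y hy).continuousAt).continuousWithinAt
    · intro y hy
      rw [interior_Ioi] at hy
      have hy' : (0:ℝ) < y := hy
      rw [(hder y hy').deriv]
      have hphi := phi_pos y
      have hpos : 0 < 15 * phi y / y ^ 6 := by positivity
      linarith
  have hlim : Tendsto g atTop (nhds 0) := by
    have hz : Tendsto (fun y : ℝ => y⁻¹ - (y ^ 3)⁻¹ + 3 * (y ^ 5)⁻¹) atTop (nhds (0 - 0 + 3 * 0)) := by
      refine (tendsto_inv_atTop_zero.sub ?_).add (Tendsto.const_mul 3 ?_)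
      · exact (tendsto_pow_atTop (by norm_num : 3 ≠ 0)).inv_tendsto_atTop
      · exact (tendsto_pow_atTop (by norm_num : 5 ≠ 0)).inv_tendsto_atTop
    have h1 := tendsto_phi.mul hz
    have h2 := h1.sub tendsto_PhiBar
    simpa using h2
  have key : (0:ℝ) ≤ g x := by
    refine le_of_tendsto hlim ?_
    filter_upwards [eventually_ge_atTop x, eventually_gt_atTop (0:ℝ)] with y hy hy0
    exact hanti.antitoneOn (Set.mem_Ioi.mpr hx) (Set.mem_Ioi.mpr hy0) hy
  simp only [hg] at key
  linarith

lemma phi_abs (u : ℝ) : phi |u| = phi u := by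
  unfold phi; rw [sq_abs]

lemma quasiCauchy_abs (u : ℝ) : quasiCauchy |u| = quasiCauchy u := by
  unfold quasiCauchy
  rw [abs_abs, phi_abs]

lemma key_upper {x : ℝ} (hx : 0 < x) :
    x ^ 2 * (1 - x * PhiBar x / phi x) ≤ 1 := by
  have hf := phi_pos x
  have hm := mills_lower x
  have hden : (0:ℝ) < 1 + x ^ 2 := by positivity
  have h1 : x ^ 2 / (1 + x ^ 2) ≤ x * PhiBar x / phi x := by
    rw [div_le_div_iff₀ hden hf]
    have h : phi x * x ≤ PhiBar x * (1 + x ^ 2) := (div_le_iff₀ hden).mp hm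
    nlinarith [mul_le_mul_of_nonneg_left h hx.le]
  have h2 : 1 - x * PhiBar x / phi x ≤ 1 - x ^ 2 / (1 + x ^ 2) := by linarith
  have h3 : x ^ 2 * (1 - x * PhiBar x / phi x) ≤ x ^ 2 * (1 - x ^ 2 / (1 + x ^ 2)) :=
    mul_le_mul_of_nonneg_left h2 (sq_nonneg x)
  have h4 : x ^ 2 * (1 - x ^ 2 / (1 + x ^ 2)) = x ^ 2 / (1 + x ^ 2) := by
    field_simp; ring
  have h5 : x ^ 2 / (1 + x ^ 2) ≤ 1 := by
    rw [div_le_one hden]; linarith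
  linarith

lemma key_lower {x : ℝ} (hx : 1 ≤ x) :
    1 - 3 / x ^ 2 ≤ x ^ 2 * (1 - x * PhiBar x / phi x) := by
  have hx0 : 0 < x := lt_of_lt_of_le one_pos hx
  have hf := phi_pos x
  have hm := mills_upper hx0
  have he : x⁻¹ - (x ^ 3)⁻¹ + 3 * (x ^ 5)⁻¹ = (x ^ 4 - x ^ 2 + 3) / x ^ 5 := by
    field_simp
  rw [he] at hm
  have hp : PhiBar x * x ^ 5 ≤ phi x * (x ^ 4 - x ^ 2 + 3) := by
    have h := mul_le_mul_of_nonneg_right hm (by positivity : (0:ℝ) ≤ x ^ 5)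
    calc PhiBar x * x ^ 5 ≤ phi x * ((x ^ 4 - x ^ 2 + 3) / x ^ 5) * x ^ 5 := h
      _ = phi x * (x ^ 4 - x ^ 2 + 3) := by field_simp
  have h1 : x * PhiBar x / phi x ≤ (x ^ 4 - x ^ 2 + 3) / x ^ 4 := by
    rw [div_le_div_iff₀ hf (by positivity : (0:ℝ) < x ^ 4)]
    nlinarith [hp]
  have h2 : 1 - (x ^ 4 - x ^ 2 + 3) / x ^ 4 ≤ 1 - x * PhiBar x / phi x := by linarith
  have h3 := mul_le_mul_of_nonneg_left h2 (sq_nonneg x)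
  have h4 : x ^ 2 * (1 - (x ^ 4 - x ^ 2 + 3) / x ^ 4) = 1 - 3 / x ^ 2 := by
    field_simp; ring
  linarith

/-- The quasi-Cauchy density has Cauchy-weight tails. -/
theorem quasiCauchy_cauchy_tails :
    (∀ u : ℝ, u ^ 2 * quasiCauchy u ≤ (Real.sqrt (2 * Real.pi))⁻¹) ∧
    Tendsto (fun u : ℝ => u ^ 2 * quasiCauchy u) (cocompact ℝ)
      (nhds ((Real.sqrt (2 * Real.pi))⁻¹)) := by
  have hc : (0:ℝ) < (Real.sqrt (2 * Real.pi))⁻¹ := by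
    have : 0 < Real.pi := Real.pi_pos
    positivity
  have part1 : ∀ u : ℝ, u ^ 2 * quasiCauchy u ≤ (Real.sqrt (2 * Real.pi))⁻¹ := by
    intro u
    rcases eq_or_ne u 0 with rfl | hu
    · simpa using hc.le
    · have hx : 0 < |u| := abs_pos.mpr hu
      have hk := key_upper hx
      unfold quasiCauchy
      rw [← phi_abs u]
      have he : u ^ 2 * ((Real.sqrt (2 * Real.pi))⁻¹ * (1 - |u| * PhiBar |u| / phi |u|))
          = (Real.sqrt (2 * Real.pi))⁻¹ * (|u| ^ 2 * (1 - |u| * PhiBar |u| / phi |u|)) := by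
        rw [sq_abs]; ring
      rw [he]
      calc (Real.sqrt (2 * Real.pi))⁻¹ * (|u| ^ 2 * (1 - |u| * PhiBar |u| / phi |u|))
          ≤ (Real.sqrt (2 * Real.pi))⁻¹ * 1 := mul_le_mul_of_nonneg_left hk hc.le
        _ = (Real.sqrt (2 * Real.pi))⁻¹ := mul_one _
  refine ⟨part1, ?_⟩
  have hF : Tendsto (fun x : ℝ => x ^ 2 * quasiCauchy x) atTop
      (nhds ((Real.sqrt (2 * Real.pi))⁻¹)) := by
    apply tendsto_of_tendsto_of_tendsto_of_le_of_le'
      (g := fun x : ℝ => (Real.sqrt (2 * Real.pi))⁻¹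
        - (Real.sqrt (2 * Real.pi))⁻¹ * (3 / x ^ 2))
      (h := fun _ : ℝ => (Real.sqrt (2 * Real.pi))⁻¹)
    · have h0 : Tendsto (fun x : ℝ => 3 / x ^ 2) atTop (nhds 0) :=
        tendsto_const_nhds.div_atTop (tendsto_pow_atTop two_ne_zero)
      have hsub : Tendsto (fun x : ℝ => (Real.sqrt (2 * Real.pi))⁻¹
          - (Real.sqrt (2 * Real.pi))⁻¹ * (3 / x ^ 2)) atTop
          (nhds ((Real.sqrt (2 * Real.pi))⁻¹ - (Real.sqrt (2 * Real.pi))⁻¹ * 0)) :=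
        tendsto_const_nhds.sub (h0.const_mul _)
      simpa using hsub
    · exact tendsto_const_nhds
    · filter_upwards [eventually_ge_atTop (1:ℝ)] with x hx1
      have hx0 : (0:ℝ) < x := lt_of_lt_of_le one_pos hx1
      have hk := key_lower hx1
      unfold quasiCauchy
      rw [abs_of_pos hx0]
      have he : x ^ 2 * ((Real.sqrt (2 * Real.pi))⁻¹ * (1 - x * PhiBar x / phi x))
          = (Real.sqrt (2 * Real.pi))⁻¹ * (x ^ 2 * (1 - x * PhiBar x / phi x)) := by ring
      rw [he]
      calc (Real.sqrt (2 * Real.pi))⁻¹ - (Real.sqrt (2 * Real.pi))⁻¹ * (3 / x ^ 2)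
          = (Real.sqrt (2 * Real.pi))⁻¹ * (1 - 3 / x ^ 2) := by ring
        _ ≤ _ := mul_le_mul_of_nonneg_left hk hc.le
    · filter_upwards with x using part1 x
  have habs : Tendsto (fun u : ℝ => |u|) (cocompact ℝ) atTop := by
    exact tendsto_norm_cocompact_atTop (E := ℝ)
  have hcomp := hF.comp habs
  apply hcomp.congr
  intro u
  simp only [Function.comp_apply]
  rw [sq_abs, quasiCauchy_abs]
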